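/- Let Φ = Φ⁴_{3,3,2} be the 5×11 matrix over a field with column blocks B₁ = [e₁,e₂,e₃,e₄], B₂ = [e₁,e₂,e₃,e₅], B₃ = [e₁,e₄,e₅] (standard basis of K⁵). Define the 6×6×3 tensor T with profile (2,2,1): T(I,J,k) is the signed 5×5 minor of Φ using the 2 columns of B₁ complementary to the pair I, the 2 columns of B₂ complementary to the pair J, and column k of B₃ (pairs ordered lexicographically). Then T has exactly 8 nonzero entries at positions (1,2,3), (1,6,1), (2,1,3), (2,5,1), (3,4,1), (4,3,1), (5,2,2), (6,1,2), and the tensor rank of T equals 8. -/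

import Mathlib

set_option maxHeartbeats 1600000
set_option maxRecDepth 16000
open Finset Submodule Matrix Module


/-- The canonical matrix Φ⁴_{3,3,2} with column blocks
B₁ = [e₁,e₂,e₃,e₄], B₂ = [e₁,e₂,e₃,e₅], B₃ = [e₁,e₄,e₅] in K⁵. -/
def PhiBig (K : Type) [Field K] : Matrix (Fin 5) (Fin 11) K :=
  Matrix.of fun r c => if r = (![0,1,2,3,0,1,2,4,0,3,4] : Fin 11 → Fin 5) c then 1 else 0

/-- The pairs 0 ≤ j₁ < j₂ ≤ 3 in lexicographic order. -/
def pair6 : Fin 6 → Fin 2 → Fin 4 :=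
  ![![0,1], ![0,2], ![0,3], ![1,2], ![1,3], ![2,3]]

/-- The pair complementary to a given pair. -/
def cpair6 : Fin 6 → Fin 2 → Fin 4 :=
  ![![2,3], ![1,3], ![1,2], ![0,3], ![0,2], ![0,1]]

/-- The single column of a block of three complementary to the pair indexed by `k` in the
lexicographic order of pairs ((0,1), (0,2), (1,2)) — the Plücker (dual) index convention. -/
def keep3 : Fin 3 → Fin 3 := ![2, 1, 0]

/-- The (unsigned) maximal minor of Φ⁴_{3,3,2} with profile (2,2,1): the 5×5 determinant
using the two columns of B₁ complementary to the pair I, the two columns of B₂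
complementary to the pair J, and the column of B₃ complementary to the pair indexed by k
(Plücker dual convention). -/
noncomputable def bigMinor (K : Type) [Field K] (I J : Fin 6) (k : Fin 3) : K :=
  Matrix.det (Matrix.of fun (r : Fin 5) (c : Fin 5) =>
    PhiBig K r
      (![Fin.castLE (by omega) (cpair6 I 0),
         Fin.castLE (by omega) (cpair6 I 1),
         ⟨4 + (cpair6 J 0).val, by have := (cpair6 J 0).isLt; omega⟩,
         ⟨4 + (cpair6 J 1).val, by have := (cpair6 J 1).isLt; omega⟩,
         ⟨8 + (keep3 k).val, by have := (keep3 k).isLt; omega⟩] c))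

/-- Tensor rank: minimal number of decomposable tensors u ⊗ v ⊗ w summing to T. -/
noncomputable def tensorRank {K : Type} [Field K] {a b c : ℕ}
    (T : Fin a → Fin b → Fin c → K) : ℕ :=
  sInf {r | ∃ (u : Fin r → Fin a → K) (v : Fin r → Fin b → K) (w : Fin r → Fin c → K),
    ∀ i j k, T i j k = ∑ p, u p i * v p j * w p k}

private def PhiBigZ : Matrix (Fin 5) (Fin 11) ℤ :=
  Matrix.of fun r c => if r = (![0,1,2,3,0,1,2,4,0,3,4] : Fin 11 → Fin 5) c then 1 else 0

private def intBigMinor (I J : Fin 6) (k : Fin 3) : ℤ :=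
  Matrix.det (Matrix.of fun (r : Fin 5) (c : Fin 5) =>
    PhiBigZ r
      (![Fin.castLE (by omega) (cpair6 I 0),
         Fin.castLE (by omega) (cpair6 I 1),
         ⟨4 + (cpair6 J 0).val, by have := (cpair6 J 0).isLt; omega⟩,
         ⟨4 + (cpair6 J 1).val, by have := (cpair6 J 1).isLt; omega⟩,
         ⟨8 + (keep3 k).val, by have := (keep3 k).isLt; omega⟩] c))

private lemma bigMinor_eq_cast (K : Type) [Field K] (I J : Fin 6) (k : Fin 3) :
    bigMinor K I J k = ((intBigMinor I J k : ℤ) : K) := by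
  unfold bigMinor intBigMinor
  rw [show ((Matrix.det (Matrix.of fun (r : Fin 5) (c : Fin 5) =>
    PhiBigZ r
      (![Fin.castLE (by omega) (cpair6 I 0),
         Fin.castLE (by omega) (cpair6 I 1),
         ⟨4 + (cpair6 J 0).val, by have := (cpair6 J 0).isLt; omega⟩,
         ⟨4 + (cpair6 J 1).val, by have := (cpair6 J 1).isLt; omega⟩,
         ⟨8 + (keep3 k).val, by have := (keep3 k).isLt; omega⟩] c)) : ℤ) : K)
    = ((Matrix.of fun (r : Fin 5) (c : Fin 5) =>
    PhiBigZ r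
      (![Fin.castLE (by omega) (cpair6 I 0),
         Fin.castLE (by omega) (cpair6 I 1),
         ⟨4 + (cpair6 J 0).val, by have := (cpair6 J 0).isLt; omega⟩,
         ⟨4 + (cpair6 J 1).val, by have := (cpair6 J 1).isLt; omega⟩,
         ⟨8 + (keep3 k).val, by have := (keep3 k).isLt; omega⟩] c)).map
        (Int.castRingHom K)).det from RingHom.map_det (Int.castRingHom K) _]
  congr 1
  ext r c
  simp only [Matrix.map_apply, Matrix.of_apply, PhiBig, PhiBigZ, Int.coe_castRingHom]
  split <;> simp

private def memS (I J : Fin 6) (k : Fin 3) : Prop :=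
      ((I, J, k) = (0, 1, 2) ∨ (I, J, k) = (0, 5, 0) ∨
       (I, J, k) = (1, 0, 2) ∨ (I, J, k) = (1, 4, 0) ∨
       (I, J, k) = (2, 3, 1) ∨ (I, J, k) = (3, 2, 0) ∨
       (I, J, k) = (4, 1, 1) ∨ (I, J, k) = (5, 0, 1))

instance (I J : Fin 6) (k : Fin 3) : Decidable (memS I J k) := by unfold memS; infer_instance

private lemma intSupport : ∀ (I J : Fin 6) (k : Fin 3), intBigMinor I J k ≠ 0 ↔ memS I J k := by
  decide

private lemma exists_decomp {K : Type} [Field K] (T : Fin 6 → Fin 6 → Fin 3 → K)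
    (h0 : ∀ I J k, ¬ memS I J k → T I J k = 0) :
    ∃ (u : Fin 8 → Fin 6 → K) (v : Fin 8 → Fin 6 → K) (w : Fin 8 → Fin 3 → K),
      ∀ i j k, T i j k = ∑ p, u p i * v p j * w p k := by
  refine ⟨fun p i => if (i:ℕ) = (![0,0,1,1,2,3,4,5] : Fin 8 → ℕ) p then 1 else 0,
          fun p j => if (j:ℕ) = (![1,5,0,4,3,2,1,0] : Fin 8 → ℕ) p then 1 else 0,
          fun p k => if (k:ℕ) = (![2,0,2,0,1,0,1,1] : Fin 8 → ℕ) p then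
            T ((![0,0,1,1,2,3,4,5] : Fin 8 → Fin 6) p) ((![1,5,0,4,3,2,1,0] : Fin 8 → Fin 6) p)
              ((![2,0,2,0,1,0,1,1] : Fin 8 → Fin 3) p) else 0, ?_⟩
  intro i j k
  fin_cases i <;> fin_cases j <;> fin_cases k <;>
    rw [Fin.sum_univ_eight] <;>
    norm_num [show ((![0,0,1,1,2,3,4,5] : Fin 8 → ℕ) 0 = 0) from rfl,
      show ((![0,0,1,1,2,3,4,5] : Fin 8 → ℕ) 1 = 0) from rfl,
      show ((![0,0,1,1,2,3,4,5] : Fin 8 → ℕ) 2 = 1) from rfl,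
      show ((![0,0,1,1,2,3,4,5] : Fin 8 → ℕ) 3 = 1) from rfl,
      show ((![0,0,1,1,2,3,4,5] : Fin 8 → ℕ) 4 = 2) from rfl,
      show ((![0,0,1,1,2,3,4,5] : Fin 8 → ℕ) 5 = 3) from rfl,
      show ((![0,0,1,1,2,3,4,5] : Fin 8 → ℕ) 6 = 4) from rfl,
      show ((![0,0,1,1,2,3,4,5] : Fin 8 → ℕ) 7 = 5) from rfl,
      show ((![1,5,0,4,3,2,1,0] : Fin 8 → ℕ) 0 = 1) from rfl,
      show ((![1,5,0,4,3,2,1,0] : Fin 8 → ℕ) 1 = 5) from rfl,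
      show ((![1,5,0,4,3,2,1,0] : Fin 8 → ℕ) 2 = 0) from rfl,
      show ((![1,5,0,4,3,2,1,0] : Fin 8 → ℕ) 3 = 4) from rfl,
      show ((![1,5,0,4,3,2,1,0] : Fin 8 → ℕ) 4 = 3) from rfl,
      show ((![1,5,0,4,3,2,1,0] : Fin 8 → ℕ) 5 = 2) from rfl,
      show ((![1,5,0,4,3,2,1,0] : Fin 8 → ℕ) 6 = 1) from rfl,
      show ((![1,5,0,4,3,2,1,0] : Fin 8 → ℕ) 7 = 0) from rfl,
      show ((![2,0,2,0,1,0,1,1] : Fin 8 → ℕ) 0 = 2) from rfl,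
      show ((![2,0,2,0,1,0,1,1] : Fin 8 → ℕ) 1 = 0) from rfl,
      show ((![2,0,2,0,1,0,1,1] : Fin 8 → ℕ) 2 = 2) from rfl,
      show ((![2,0,2,0,1,0,1,1] : Fin 8 → ℕ) 3 = 0) from rfl,
      show ((![2,0,2,0,1,0,1,1] : Fin 8 → ℕ) 4 = 1) from rfl,
      show ((![2,0,2,0,1,0,1,1] : Fin 8 → ℕ) 5 = 0) from rfl,
      show ((![2,0,2,0,1,0,1,1] : Fin 8 → ℕ) 6 = 1) from rfl,
      show ((![2,0,2,0,1,0,1,1] : Fin 8 → ℕ) 7 = 1) from rfl,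
      show ((![0,0,1,1,2,3,4,5] : Fin 8 → Fin 6) 0 = 0) from rfl,
      show ((![0,0,1,1,2,3,4,5] : Fin 8 → Fin 6) 1 = 0) from rfl,
      show ((![0,0,1,1,2,3,4,5] : Fin 8 → Fin 6) 2 = 1) from rfl,
      show ((![0,0,1,1,2,3,4,5] : Fin 8 → Fin 6) 3 = 1) from rfl,
      show ((![0,0,1,1,2,3,4,5] : Fin 8 → Fin 6) 4 = 2) from rfl,
      show ((![0,0,1,1,2,3,4,5] : Fin 8 → Fin 6) 5 = 3) from rfl,
      show ((![0,0,1,1,2,3,4,5] : Fin 8 → Fin 6) 6 = 4) from rfl,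
      show ((![0,0,1,1,2,3,4,5] : Fin 8 → Fin 6) 7 = 5) from rfl,
      show ((![1,5,0,4,3,2,1,0] : Fin 8 → Fin 6) 0 = 1) from rfl,
      show ((![1,5,0,4,3,2,1,0] : Fin 8 → Fin 6) 1 = 5) from rfl,
      show ((![1,5,0,4,3,2,1,0] : Fin 8 → Fin 6) 2 = 0) from rfl,
      show ((![1,5,0,4,3,2,1,0] : Fin 8 → Fin 6) 3 = 4) from rfl,
      show ((![1,5,0,4,3,2,1,0] : Fin 8 → Fin 6) 4 = 3) from rfl,
      show ((![1,5,0,4,3,2,1,0] : Fin 8 → Fin 6) 5 = 2) from rfl,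
      show ((![1,5,0,4,3,2,1,0] : Fin 8 → Fin 6) 6 = 1) from rfl,
      show ((![1,5,0,4,3,2,1,0] : Fin 8 → Fin 6) 7 = 0) from rfl,
      show ((![2,0,2,0,1,0,1,1] : Fin 8 → Fin 3) 0 = 2) from rfl,
      show ((![2,0,2,0,1,0,1,1] : Fin 8 → Fin 3) 1 = 0) from rfl,
      show ((![2,0,2,0,1,0,1,1] : Fin 8 → Fin 3) 2 = 2) from rfl,
      show ((![2,0,2,0,1,0,1,1] : Fin 8 → Fin 3) 3 = 0) from rfl,
      show ((![2,0,2,0,1,0,1,1] : Fin 8 → Fin 3) 4 = 1) from rfl,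
      show ((![2,0,2,0,1,0,1,1] : Fin 8 → Fin 3) 5 = 0) from rfl,
      show ((![2,0,2,0,1,0,1,1] : Fin 8 → Fin 3) 6 = 1) from rfl,
      show ((![2,0,2,0,1,0,1,1] : Fin 8 → Fin 3) 7 = 1) from rfl] <;>
    first | rfl | (refine h0 _ _ _ ?_ ; decide)

private def jmap : Fin 4 → Fin 6 := ![2,3,4,5]

private lemma rank_ge_eight {K : Type} [Field K] {r : ℕ}
    (T : Fin 6 → Fin 6 → Fin 3 → K)
    (h0 : ∀ I J k, ¬ memS I J k → T I J k = 0)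
    (e1 : T 0 1 2 ≠ 0) (e2 : T 0 5 0 ≠ 0) (e3 : T 1 0 2 ≠ 0) (e4 : T 1 4 0 ≠ 0)
    (e5 : T 2 3 1 ≠ 0) (e6 : T 3 2 0 ≠ 0) (e7 : T 4 1 1 ≠ 0) (e8 : T 5 0 1 ≠ 0)
    (u : Fin r → Fin 6 → K) (v : Fin r → Fin 6 → K) (w : Fin r → Fin 3 → K)
    (h : ∀ i j k, T i j k = ∑ p, u p i * v p j * w p k) : 8 ≤ r := by
  classical
  by_contra hr
  push_neg at hr
  -- key evaluation identity
  have key : ∀ (i0 : Fin 6) (lam : Fin 4 → K) (J : Fin 6) (k : Fin 3),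
      (∑ p, v p J * ((u p i0 - ∑ j, lam j * u p (jmap j)) * w p k))
        = T i0 J k - ∑ j, lam j * T (jmap j) J k := by
    intro i0 lam J k
    have e : ∀ p : Fin r, v p J * ((u p i0 - ∑ j, lam j * u p (jmap j)) * w p k)
        = u p i0 * v p J * w p k - ∑ j, lam j * (u p (jmap j) * v p J * w p k) := by
      intro p
      rw [sub_mul, mul_sub, Finset.sum_mul, Finset.mul_sum]
      congr 1
      · ring
      · exact Finset.sum_congr rfl fun j _ => by ring
    rw [Finset.sum_congr rfl fun p _ => e p, Finset.sum_sub_distrib, Finset.sum_comm]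
    simp only [h]
    congr 1
    exact Finset.sum_congr rfl fun j _ => by rw [Finset.mul_sum]
  -- evaluation of linear combinations of the last four first-slices
  have eval0 : ∀ (mu : Fin 4 → K), (∀ p, ∑ j, mu j * u p (jmap j) = 0) →
      ∀ (J : Fin 6) (k : Fin 3), ∑ j, mu j * T (jmap j) J k = 0 := by
    intro mu hmu J k
    have e : ∀ j : Fin 4, mu j * T (jmap j) J k = ∑ p, mu j * (u p (jmap j) * v p J * w p k) := by
      intro j; rw [h, Finset.mul_sum]
    rw [Finset.sum_congr rfl fun j _ => e j, Finset.sum_comm]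
    refine Finset.sum_eq_zero fun p _ => ?_
    calc (∑ j, mu j * (u p (jmap j) * v p J * w p k))
        = (∑ j, mu j * u p (jmap j)) * (v p J * w p k) := by
          rw [Finset.sum_mul]; exact Finset.sum_congr rfl fun j _ => by ring
      _ = 0 := by rw [hmu p, zero_mul]
  have Rindep : ∀ (mu : Fin 4 → K), (∀ p, ∑ j, mu j * u p (jmap j) = 0) → mu = 0 := by
    intro mu hmu
    have h231 := eval0 mu hmu 3 1
    have h320 := eval0 mu hmu 2 0
    have h411 := eval0 mu hmu 1 1
    have h501 := eval0 mu hmu 0 1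
    rw [Fin.sum_univ_four] at h231 h320 h411 h501
    simp only [show jmap 0 = 2 from rfl, show jmap 1 = 3 from rfl,
      show jmap 2 = 4 from rfl, show jmap 3 = 5 from rfl] at h231 h320 h411 h501
    rw [h0 3 3 1 (by decide), h0 4 3 1 (by decide), h0 5 3 1 (by decide)] at h231
    rw [h0 2 2 0 (by decide), h0 4 2 0 (by decide), h0 5 2 0 (by decide)] at h320
    rw [h0 2 1 1 (by decide), h0 3 1 1 (by decide), h0 5 1 1 (by decide)] at h411
    rw [h0 2 0 1 (by decide), h0 3 0 1 (by decide), h0 4 0 1 (by decide)] at h501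
    simp only [mul_zero, add_zero, zero_add, mul_eq_zero] at h231 h320 h411 h501
    funext j
    fin_cases j
    · exact h231.resolve_right e5
    · exact h320.resolve_right e6
    · exact h411.resolve_right e7
    · exact h501.resolve_right e8
  -- the span of the vectors (u p (jmap ·)) is all of K^4
  have hspan : Submodule.span K (Set.range fun p : Fin r => fun j : Fin 4 => u p (jmap j)) = ⊤ := by
    set M : Matrix (Fin 4) (Fin r) K := Matrix.of fun j p => u p (jmap j) with hM
    have hli : LinearIndependent K (fun j : Fin 4 => M j) := by
      rw [Fintype.linearIndependent_iff]
      intro mu hmu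
      have : mu = 0 := by
        refine Rindep mu fun p => ?_
        have := congrFun hmu p
        simpa [Finset.sum_apply, hM] using this
      exact fun j => congrFun this j
    have h1 : finrank K (Submodule.span K (Set.range M)) = 4 := by
      rw [finrank_span_eq_card hli]; simp
    have h2 : Mᵀ.rank = M.rank := Matrix.rank_transpose M
    rw [Matrix.rank_eq_finrank_span_cols] at h2
    change finrank K (Submodule.span K (Set.range M)) = M.rank at h2
    rw [Matrix.rank_eq_finrank_span_cols] at h2
    change _ = finrank K (Submodule.span K (Set.range Mᵀ)) at h2
    have h3 : finrank K (Submodule.span K (Set.range Mᵀ)) = 4 := by rw [← h2, h1]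
    have h4 : (Set.range fun p : Fin r => fun j : Fin 4 => u p (jmap j)) = Set.range Mᵀ := rfl
    rw [h4]
    apply Submodule.eq_top_of_finrank_eq
    rw [h3, Module.finrank_pi]
    simp
  -- extract a basis from the spanning family, with preimages P
  obtain ⟨b, hbsub, hbspan, hbli⟩ :=
    exists_linearIndependent K (Set.range fun p : Fin r => fun j : Fin 4 => u p (jmap j))
  rw [hspan] at hbspan
  have hbfin : b.Finite := hbli.setFinite
  haveI := hbfin.fintype
  have hbbasis : Basis b K (Fin 4 → K) :=
    Basis.mk hbli (by rw [Subtype.range_coe, hbspan])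
  have hcard : Fintype.card b = 4 := by
    have h5 := Module.finrank_eq_card_basis hbbasis
    rw [Module.finrank_pi] at h5
    simpa using h5.symm
  have hpre : ∀ x : b, ∃ p : Fin r, (fun j : Fin 4 => u p (jmap j)) = (x : Fin 4 → K) :=
    fun x => hbsub x.2
  choose pre hpre' using hpre
  have hprei : Function.Injective pre := by
    intro x y hxy
    exact Subtype.ext (by rw [← hpre' x, ← hpre' y, hxy])
  let eqv : Fin 4 ≃ b := (Fintype.equivFinOfCardEq hcard).symm
  set P : Fin 4 → Fin r := fun i => pre (eqv i) with hP
  have hPinj : Function.Injective P := hprei.comp eqv.injective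
  have hRP : ∀ i, (fun j : Fin 4 => u (P i) (jmap j)) = ((eqv i : Fin 4 → K)) :=
    fun i => hpre' (eqv i)
  -- solvability of interpolation on the coordinates P
  have solv : ∀ t : Fin 4 → K, ∃ lam : Fin 4 → K,
      ∀ i, ∑ j, lam j * u (P i) (jmap j) = t i := by
    have hLinj : Function.Injective
        (fun lam : Fin 4 → K => fun i : Fin 4 => ∑ j, lam j * u (P i) (jmap j)) := by
      intro a c hac
      -- consider the difference lam := a - c; show it annihilates all of b, hence is 0
      have hd : ∀ i : Fin 4, ∑ j, (a j - c j) * u (P i) (jmap j) = 0 := by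
        intro i
        have h6 : (∑ j, a j * u (P i) (jmap j)) = ∑ j, c j * u (P i) (jmap j) :=
          congrFun hac i
        simp only [sub_mul, Finset.sum_sub_distrib, h6, sub_self]
      -- the functional x ↦ ∑ j, (a j - c j) * x j vanishes on b
      have hfb : ∀ x ∈ b, ∑ j, (a j - c j) * x j = 0 := by
        intro x hx
        have hxe : ((eqv (eqv.symm ⟨x, hx⟩) : b) : Fin 4 → K) = x := by
          rw [Equiv.apply_symm_apply]
        rw [← hxe, ← hRP (eqv.symm ⟨x, hx⟩)]
        exact hd _
      have hzero : ∀ j, a j - c j = 0 := by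
        -- use that b spans: the kernel of the functional is a submodule containing b
        set f : (Fin 4 → K) →ₗ[K] K :=
          { toFun := fun x => ∑ j, (a j - c j) * x j
            map_add' := by intro x y; simp [mul_add, Finset.sum_add_distrib]
            map_smul' := by intro m x; simp [Finset.mul_sum]; congr 1; funext j; ring } with hf
        have hker : Submodule.span K b ≤ LinearMap.ker f := by
          rw [Submodule.span_le]
          intro x hx
          simp only [SetLike.mem_coe, LinearMap.mem_ker, hf, LinearMap.coe_mk, AddHom.coe_mk]
          exact hfb x hx
        rw [hbspan, top_le_iff] at hker
        intro j
        have hj : f (Pi.single j 1) = 0 := by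
          rw [← LinearMap.mem_ker, hker]; trivial
        simp only [hf, LinearMap.coe_mk, AddHom.coe_mk] at hj
        rw [Finset.sum_eq_single j (fun j' _ hj' => by simp [Pi.single_apply, hj']) (by simp)] at hj
        simpa using hj
      funext j
      exact sub_eq_zero.mp (hzero j)
    let Y : Matrix (Fin 4) (Fin 4) K := Matrix.of fun i j => u (P i) (jmap j)
    have hYeq : ∀ (lam : Fin 4 → K) (i : Fin 4),
        Y.mulVecLin lam i = ∑ j, lam j * u (P i) (jmap j) := by
      intro lam i
      simp only [Matrix.mulVecLin_apply, Matrix.mulVec, dotProduct, Matrix.of_apply, Y]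
      exact Finset.sum_congr rfl fun j _ => mul_comm _ _
    have hinj : Function.Injective Y.mulVecLin := by
      intro a c hac'
      apply hLinj
      funext i
      show ∑ j, a j * u (P i) (jmap j) = ∑ j, c j * u (P i) (jmap j)
      rw [← hYeq a i, ← hYeq c i, hac']
    have hsurj := LinearMap.injective_iff_surjective.mp hinj
    intro t
    obtain ⟨lam, hlam⟩ := hsurj t
    exact ⟨lam, fun i => by rw [← hYeq lam i, hlam]⟩
  obtain ⟨lam, hlam⟩ := solv (fun i => u (P i) 0)
  obtain ⟨mu, hmu⟩ := solv (fun i => u (P i) 1)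
  -- the modified slices, combined into a 6×6 matrix N
  set g : Fin r → Fin 6 → K := fun p c =>
    if hc : (c : ℕ) < 3 then (u p 0 - ∑ j, lam j * u p (jmap j)) * w p ⟨c, hc⟩
    else (u p 1 - ∑ j, mu j * u p (jmap j)) * w p ⟨(c : ℕ) - 3, by omega⟩ with hg
  set N : Fin 6 → Fin 6 → K := fun J c => ∑ p, v p J * g p c with hNdef
  have hgP : ∀ i, g (P i) = 0 := by
    intro i
    funext c
    have hb0 : u (P i) 0 - ∑ j, lam j * u (P i) (jmap j) = 0 := by
      rw [hlam i]; ring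
    have hc0 : u (P i) 1 - ∑ j, mu j * u (P i) (jmap j) = 0 := by
      rw [hmu i]; ring
    by_cases hc : (c : ℕ) < 3
    · simp only [hg, dif_pos hc, hb0, zero_mul, Pi.zero_apply]
    · simp only [hg, dif_neg hc, hc0, zero_mul, Pi.zero_apply]
  have hNlow : ∀ (J : Fin 6) (k : Fin 3),
      N J (Fin.castLE (by omega) k) = T 0 J k - ∑ j, lam j * T (jmap j) J k := by
    intro J k
    have hgc : ∀ p, g p (Fin.castLE (by omega) k)
        = (u p 0 - ∑ j, lam j * u p (jmap j)) * w p k := by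
      intro p
      have hlt : ((Fin.castLE (by omega : (3:ℕ) ≤ 6) k : Fin 6) : ℕ) < 3 := k.isLt
      rw [hg]
      simp only [dif_pos hlt]
      rfl
    rw [hNdef]
    simp only [hgc]
    exact key 0 lam J k
  have hNhigh : ∀ (J : Fin 6) (k : Fin 3),
      N J ⟨(k : ℕ) + 3, by omega⟩ = T 1 J k - ∑ j, mu j * T (jmap j) J k := by
    intro J k
    have hgc : ∀ p, g p ⟨(k : ℕ) + 3, by omega⟩
        = (u p 1 - ∑ j, mu j * u p (jmap j)) * w p k := by
      intro p
      have hlt : ¬ (((⟨(k : ℕ) + 3, by omega⟩ : Fin 6) : ℕ) < 3) := by simp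
      rw [hg]
      simp only [dif_neg hlt]
      rfl
    rw [hNdef]
    simp only [hgc]
    exact key 1 mu J k
  -- vanishing of combinations over the last four slices at off-support positions
  have hz : ∀ (co : Fin 4 → K) (J : Fin 6) (k : Fin 3),
      T 2 J k = 0 → T 3 J k = 0 → T 4 J k = 0 → T 5 J k = 0 →
      (∑ j, co j * T (jmap j) J k) = 0 := by
    intro co J k a2 a3 a4 a5
    rw [Fin.sum_univ_four]
    simp only [show jmap 0 = 2 from rfl, show jmap 1 = 3 from rfl,
      show jmap 2 = 4 from rfl, show jmap 3 = 5 from rfl, a2, a3, a4, a5]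
    ring
  -- the sixteen entries of interest of N
  have n50 : N 5 0 = T 0 5 0 := by
    have h7 := hNlow 5 0
    rw [show (Fin.castLE (by omega : (3:ℕ) ≤ 6) (0 : Fin 3)) = (0 : Fin 6) from rfl] at h7
    rw [h7, hz lam 5 0 (h0 2 5 0 (by decide)) (h0 3 5 0 (by decide))
      (h0 4 5 0 (by decide)) (h0 5 5 0 (by decide))]
    ring
  have n52 : N 5 2 = 0 := by
    have h7 := hNlow 5 2
    rw [show (Fin.castLE (by omega : (3:ℕ) ≤ 6) (2 : Fin 3)) = (2 : Fin 6) from rfl] at h7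
    rw [h7, hz lam 5 2 (h0 2 5 2 (by decide)) (h0 3 5 2 (by decide))
      (h0 4 5 2 (by decide)) (h0 5 5 2 (by decide)), h0 0 5 2 (by decide)]
    ring
  have n53 : N 5 3 = 0 := by
    have h7 := hNhigh 5 0
    rw [show (⟨((0:Fin 3) : ℕ) + 3, by omega⟩ : Fin 6) = (3 : Fin 6) from rfl] at h7
    rw [h7, hz mu 5 0 (h0 2 5 0 (by decide)) (h0 3 5 0 (by decide))
      (h0 4 5 0 (by decide)) (h0 5 5 0 (by decide)), h0 1 5 0 (by decide)]
    ring
  have n55 : N 5 5 = 0 := by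
    have h7 := hNhigh 5 2
    rw [show (⟨((2:Fin 3) : ℕ) + 3, by omega⟩ : Fin 6) = (5 : Fin 6) from rfl] at h7
    rw [h7, hz mu 5 2 (h0 2 5 2 (by decide)) (h0 3 5 2 (by decide))
      (h0 4 5 2 (by decide)) (h0 5 5 2 (by decide)), h0 1 5 2 (by decide)]
    ring
  have n10 : N 1 0 = 0 := by
    have h7 := hNlow 1 0
    rw [show (Fin.castLE (by omega : (3:ℕ) ≤ 6) (0 : Fin 3)) = (0 : Fin 6) from rfl] at h7
    rw [h7, hz lam 1 0 (h0 2 1 0 (by decide)) (h0 3 1 0 (by decide))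
      (h0 4 1 0 (by decide)) (h0 5 1 0 (by decide)), h0 0 1 0 (by decide)]
    ring
  have n12 : N 1 2 = T 0 1 2 := by
    have h7 := hNlow 1 2
    rw [show (Fin.castLE (by omega : (3:ℕ) ≤ 6) (2 : Fin 3)) = (2 : Fin 6) from rfl] at h7
    rw [h7, hz lam 1 2 (h0 2 1 2 (by decide)) (h0 3 1 2 (by decide))
      (h0 4 1 2 (by decide)) (h0 5 1 2 (by decide))]
    ring
  have n13 : N 1 3 = 0 := by
    have h7 := hNhigh 1 0
    rw [show (⟨((0:Fin 3) : ℕ) + 3, by omega⟩ : Fin 6) = (3 : Fin 6) from rfl] at h7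
    rw [h7, hz mu 1 0 (h0 2 1 0 (by decide)) (h0 3 1 0 (by decide))
      (h0 4 1 0 (by decide)) (h0 5 1 0 (by decide)), h0 1 1 0 (by decide)]
    ring
  have n15 : N 1 5 = 0 := by
    have h7 := hNhigh 1 2
    rw [show (⟨((2:Fin 3) : ℕ) + 3, by omega⟩ : Fin 6) = (5 : Fin 6) from rfl] at h7
    rw [h7, hz mu 1 2 (h0 2 1 2 (by decide)) (h0 3 1 2 (by decide))
      (h0 4 1 2 (by decide)) (h0 5 1 2 (by decide)), h0 1 1 2 (by decide)]
    ring
  have n40 : N 4 0 = 0 := by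
    have h7 := hNlow 4 0
    rw [show (Fin.castLE (by omega : (3:ℕ) ≤ 6) (0 : Fin 3)) = (0 : Fin 6) from rfl] at h7
    rw [h7, hz lam 4 0 (h0 2 4 0 (by decide)) (h0 3 4 0 (by decide))
      (h0 4 4 0 (by decide)) (h0 5 4 0 (by decide)), h0 0 4 0 (by decide)]
    ring
  have n42 : N 4 2 = 0 := by
    have h7 := hNlow 4 2
    rw [show (Fin.castLE (by omega : (3:ℕ) ≤ 6) (2 : Fin 3)) = (2 : Fin 6) from rfl] at h7
    rw [h7, hz lam 4 2 (h0 2 4 2 (by decide)) (h0 3 4 2 (by decide))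
      (h0 4 4 2 (by decide)) (h0 5 4 2 (by decide)), h0 0 4 2 (by decide)]
    ring
  have n43 : N 4 3 = T 1 4 0 := by
    have h7 := hNhigh 4 0
    rw [show (⟨((0:Fin 3) : ℕ) + 3, by omega⟩ : Fin 6) = (3 : Fin 6) from rfl] at h7
    rw [h7, hz mu 4 0 (h0 2 4 0 (by decide)) (h0 3 4 0 (by decide))
      (h0 4 4 0 (by decide)) (h0 5 4 0 (by decide))]
    ring
  have n45 : N 4 5 = 0 := by
    have h7 := hNhigh 4 2
    rw [show (⟨((2:Fin 3) : ℕ) + 3, by omega⟩ : Fin 6) = (5 : Fin 6) from rfl] at h7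
    rw [h7, hz mu 4 2 (h0 2 4 2 (by decide)) (h0 3 4 2 (by decide))
      (h0 4 4 2 (by decide)) (h0 5 4 2 (by decide)), h0 1 4 2 (by decide)]
    ring
  have n00 : N 0 0 = 0 := by
    have h7 := hNlow 0 0
    rw [show (Fin.castLE (by omega : (3:ℕ) ≤ 6) (0 : Fin 3)) = (0 : Fin 6) from rfl] at h7
    rw [h7, hz lam 0 0 (h0 2 0 0 (by decide)) (h0 3 0 0 (by decide))
      (h0 4 0 0 (by decide)) (h0 5 0 0 (by decide)), h0 0 0 0 (by decide)]
    ring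
  have n02 : N 0 2 = 0 := by
    have h7 := hNlow 0 2
    rw [show (Fin.castLE (by omega : (3:ℕ) ≤ 6) (2 : Fin 3)) = (2 : Fin 6) from rfl] at h7
    rw [h7, hz lam 0 2 (h0 2 0 2 (by decide)) (h0 3 0 2 (by decide))
      (h0 4 0 2 (by decide)) (h0 5 0 2 (by decide)), h0 0 0 2 (by decide)]
    ring
  have n03 : N 0 3 = 0 := by
    have h7 := hNhigh 0 0
    rw [show (⟨((0:Fin 3) : ℕ) + 3, by omega⟩ : Fin 6) = (3 : Fin 6) from rfl] at h7
    rw [h7, hz mu 0 0 (h0 2 0 0 (by decide)) (h0 3 0 0 (by decide))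
      (h0 4 0 0 (by decide)) (h0 5 0 0 (by decide)), h0 1 0 0 (by decide)]
    ring
  have n05 : N 0 5 = T 1 0 2 := by
    have h7 := hNhigh 0 2
    rw [show (⟨((2:Fin 3) : ℕ) + 3, by omega⟩ : Fin 6) = (5 : Fin 6) from rfl] at h7
    rw [h7, hz mu 0 2 (h0 2 0 2 (by decide)) (h0 3 0 2 (by decide))
      (h0 4 0 2 (by decide)) (h0 5 0 2 (by decide))]
    ring
  -- the four rows of N indexed by ![5,1,4,0] are linearly independent
  set x : Fin 4 → Fin 6 → K := fun m => N ((![5,1,4,0] : Fin 4 → Fin 6) m) with hx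
  have hxli : LinearIndependent K x := by
    rw [Fintype.linearIndependent_iff]
    intro cc hcc
    have hev : ∀ c0 : Fin 6, ∑ m, cc m * N ((![5,1,4,0] : Fin 4 → Fin 6) m) c0 = 0 := by
      intro c0
      have h8 := congrFun hcc c0
      simpa [hx, Finset.sum_apply] using h8
    have hv0 := hev 0
    have hv2 := hev 2
    have hv3 := hev 3
    have hv5 := hev 5
    rw [Fin.sum_univ_four] at hv0 hv2 hv3 hv5
    simp only [show (![5,1,4,0] : Fin 4 → Fin 6) 0 = 5 from rfl,
      show (![5,1,4,0] : Fin 4 → Fin 6) 1 = 1 from rfl,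
      show (![5,1,4,0] : Fin 4 → Fin 6) 2 = 4 from rfl,
      show (![5,1,4,0] : Fin 4 → Fin 6) 3 = 0 from rfl] at hv0 hv2 hv3 hv5
    rw [n50, n10, n40, n00] at hv0
    rw [n52, n12, n42, n02] at hv2
    rw [n53, n13, n43, n03] at hv3
    rw [n55, n15, n45, n05] at hv5
    simp only [mul_zero, add_zero, zero_add, mul_eq_zero] at hv0 hv2 hv3 hv5
    intro m
    fin_cases m
    · exact hv0.resolve_right e2
    · exact hv2.resolve_right e1
    · exact hv3.resolve_right e4
    · exact hv5.resolve_right e3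
  -- but those rows live in the span of at most r - 4 ≤ 3 vectors
  set s : Finset (Fin r) := Finset.univ \ Finset.image P Finset.univ with hs
  set tset : Finset (Fin 6 → K) := s.image g with hts
  have hxmem : ∀ m, x m ∈ Submodule.span K (tset : Set (Fin 6 → K)) := by
    intro m
    have hsum : x m = ∑ p ∈ s, v p ((![5,1,4,0] : Fin 4 → Fin 6) m) • g p := by
      rw [Finset.sum_subset (Finset.sdiff_subset)]
      · funext c
        rw [hx, hNdef]
        simp [Finset.sum_apply]
      · intro p _ hp
        have : p ∈ Finset.image P Finset.univ := by
          by_contra hnp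
          exact hp (Finset.mem_sdiff.mpr ⟨Finset.mem_univ p, hnp⟩)
        obtain ⟨i, _, hip⟩ := Finset.mem_image.mp this
        rw [← hip, hgP i, smul_zero]
    rw [hsum]
    refine Submodule.sum_mem _ fun p hp => Submodule.smul_mem _ _ (Submodule.subset_span ?_)
    exact Finset.mem_coe.mpr (Finset.mem_image_of_mem g hp)
  have hcards : s.card = r - 4 := by
    rw [hs, Finset.card_sdiff_of_subset (Finset.subset_univ _), Finset.card_univ,
      Finset.card_image_of_injective _ hPinj, Finset.card_univ]
    simp
  have hfr : finrank K (Submodule.span K (tset : Set (Fin 6 → K))) ≤ 3 := by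
    have h9 := finrank_span_finset_le_card (R := K) tset
    have h10 : tset.card ≤ s.card := Finset.card_image_le
    have : Set.finrank K (tset : Set (Fin 6 → K)) = finrank K (Submodule.span K (tset : Set (Fin 6 → K))) := rfl
    omega
  have hxli2 : LinearIndependent K
      (fun m => (⟨x m, hxmem m⟩ : Submodule.span K (tset : Set (Fin 6 → K)))) :=
    LinearIndependent.of_comp (Submodule.span K (tset : Set (Fin 6 → K))).subtype hxli
  have hcontra := hxli2.fintype_card_le_finrank
  simp only [Fintype.card_fin] at hcontra
  omega

/-- the 6×6×3 trifocal Grassmann tensor of Φ⁴_{3,3,2} with profile (2,2,1)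
(signed maximal minors, any choice of signs) has exactly 8 nonzero entries at the
1-based positions (1,2,3), (1,6,1), (2,1,3), (2,5,1), (3,4,2), (4,3,1), (5,2,2), (6,1,2),
and its tensor rank is 8. -/
theorem stmt_15 {K : Type} [Field K] [CharZero K]
    (ε : Fin 6 → Fin 6 → Fin 3 → K)
    (hε : ∀ I J k, ε I J k = 1 ∨ ε I J k = -1)
    (T : Fin 6 → Fin 6 → Fin 3 → K)
    (hT : ∀ I J k, T I J k = ε I J k * bigMinor K I J k) :
    (∀ I J k, T I J k ≠ 0 ↔
      ((I, J, k) = (0, 1, 2) ∨ (I, J, k) = (0, 5, 0) ∨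
       (I, J, k) = (1, 0, 2) ∨ (I, J, k) = (1, 4, 0) ∨
       (I, J, k) = (2, 3, 1) ∨ (I, J, k) = (3, 2, 0) ∨
       (I, J, k) = (4, 1, 1) ∨ (I, J, k) = (5, 0, 1))) ∧
    tensorRank T = 8 := by
  classical
  have hsupp0 : ∀ (I J : Fin 6) (k : Fin 3), T I J k ≠ 0 ↔ intBigMinor I J k ≠ 0 := by
    intro I J k
    rw [hT I J k, bigMinor_eq_cast]
    constructor
    · intro hne h9
      rw [h9] at hne
      simp at hne
    · intro h9
      have h10 : ((intBigMinor I J k : ℤ) : K) ≠ 0 := Int.cast_ne_zero.mpr h9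
      rcases hε I J k with h11 | h11 <;> rw [h11] <;> simpa using h10
  have hsupp : ∀ (I J : Fin 6) (k : Fin 3), T I J k ≠ 0 ↔ memS I J k :=
    fun I J k => (hsupp0 I J k).trans (intSupport I J k)
  have h0 : ∀ (I J : Fin 6) (k : Fin 3), ¬ memS I J k → T I J k = 0 := by
    intro I J k hm
    by_contra hne
    exact hm ((hsupp I J k).mp hne)
  constructor
  · exact fun I J k => hsupp I J k
  · have e1 : T 0 1 2 ≠ 0 := (hsupp 0 1 2).mpr (by decide)
    have e2 : T 0 5 0 ≠ 0 := (hsupp 0 5 0).mpr (by decide)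
    have e3 : T 1 0 2 ≠ 0 := (hsupp 1 0 2).mpr (by decide)
    have e4 : T 1 4 0 ≠ 0 := (hsupp 1 4 0).mpr (by decide)
    have e5 : T 2 3 1 ≠ 0 := (hsupp 2 3 1).mpr (by decide)
    have e6 : T 3 2 0 ≠ 0 := (hsupp 3 2 0).mpr (by decide)
    have e7 : T 4 1 1 ≠ 0 := (hsupp 4 1 1).mpr (by decide)
    have e8 : T 5 0 1 ≠ 0 := (hsupp 5 0 1).mpr (by decide)
    obtain ⟨u, v, w, hd⟩ := exists_decomp T h0
    have hmem8 : 8 ∈ {r | ∃ (u : Fin r → Fin 6 → K) (v : Fin r → Fin 6 → K)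
        (w : Fin r → Fin 3 → K), ∀ i j k, T i j k = ∑ p, u p i * v p j * w p k} :=
      ⟨u, v, w, hd⟩
    have hnon : {r | ∃ (u : Fin r → Fin 6 → K) (v : Fin r → Fin 6 → K)
        (w : Fin r → Fin 3 → K), ∀ i j k, T i j k = ∑ p, u p i * v p j * w p k}.Nonempty :=
      ⟨8, hmem8⟩
    have hlow : 8 ≤ tensorRank T := by
      have hm := Nat.sInf_mem hnon
      obtain ⟨u', v', w', hd'⟩ := hm
      exact rank_ge_eight T h0 e1 e2 e3 e4 e5 e6 e7 e8 u' v' w' hd'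
    exact le_antisymm (Nat.sInf_le hmem8) hlow
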